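/- Let G be a finite weighted graph with normalized graph Laplacian L₀ and synchronization data ρ, and let x : V → R^d. Then there exists α ≥ 0 such that r = x − α·x̃ (where x̃ is the entrywise normalization of x) satisfies Σ_i d_i‖r_i‖² ≤ (η(x)/λ₂(L₀))·Σ_i d_i‖x_i‖², where λ₂(L₀) is the second smallest eigenvalue of the normalized graph Laplacian, assumed positive. -/

import Mathlib

open Matrix
open scoped Classical

/-!
Only the norms `a i = ‖x i‖` matter. Since each `ρ i j` is an isometry, the reverse triangle
inequality bounds the Dirichlet energy `½ ∑ w i j (a i - a j)²` by the numerator of `η(x)`, and this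
energy is the quadratic form of `L₀` at `D^{1/2} (a - α)` for every constant `α`. Taking `α` the
degree-weighted mean of `a` makes `D^{1/2} (a - α)` orthogonal to `D^{1/2} 1 ∈ ker L₀`, so
Courant–Fischer gives `λ₂ ∑ dᵢ (a i - α)² ≤ ½ ∑ w i j (a i - a j)²`. Finally
`‖x i - α x̃ i‖ ≤ |‖x i‖ - α|`.
-/

lemma Matrix.norm_toEuclideanLin_of_mem_unitaryGroup {𝕜 ι : Type*} [RCLike 𝕜] [Fintype ι]
    [DecidableEq ι] {U : Matrix ι ι 𝕜} (hU : U ∈ unitaryGroup ι 𝕜) (v : EuclideanSpace 𝕜 ι) :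
    ‖toEuclideanLin U v‖ = ‖v‖ :=
  (toEuclideanCLM (n := ι) (𝕜 := 𝕜) U).norm_map_of_mem_unitary (Unitary.map_mem _ hU) v

lemma Tuple.comp_sort_one_le_of_ne {α : Type*} [LinearOrder α] {n : ℕ} (hn : 1 < n)
    (f : Fin n → α) {k : Fin n} (hk : k ≠ Tuple.sort f ⟨0, by omega⟩) :
    (f ∘ Tuple.sort f) ⟨1, hn⟩ ≤ f k := by
  have hpos : (⟨1, hn⟩ : Fin n) ≤ (Tuple.sort f).symm k := by
    rw [Fin.le_def, Nat.one_le_iff_ne_zero]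
    exact fun h0 => hk (by rw [← Fin.ext (b := ⟨0, _⟩) h0, Equiv.apply_symm_apply])
  simpa using Tuple.monotone_sort f hpos

namespace Matrix.IsHermitian

variable {ι : Type*} [Fintype ι] [DecidableEq ι] {A : Matrix ι ι ℝ} (hA : A.IsHermitian)

lemma dotProduct_eq_sum_eigenvectorBasis (u v : ι → ℝ) :
    u ⬝ᵥ v = ∑ k, (⇑(hA.eigenvectorBasis k) ⬝ᵥ u) * (⇑(hA.eigenvectorBasis k) ⬝ᵥ v) := by
  have := hA.eigenvectorBasis.sum_inner_mul_inner (WithLp.toLp 2 u) (WithLp.toLp 2 v)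
  simp only [EuclideanSpace.inner_eq_star_dotProduct, star_trivial] at this
  rw [dotProduct_comm, ← this]
  exact Finset.sum_congr rfl fun k _ => by rw [dotProduct_comm v]

lemma eigenvectorBasis_dotProduct_mulVec (k : ι) (v : ι → ℝ) :
    ⇑(hA.eigenvectorBasis k) ⬝ᵥ (A *ᵥ v) = hA.eigenvalues k * (⇑(hA.eigenvectorBasis k) ⬝ᵥ v) := by
  rw [dotProduct_mulVec, ← mulVec_transpose, ← conjTranspose_eq_transpose_of_trivial, hA.eq,
    mulVec_eigenvectorBasis, smul_dotProduct, smul_eq_mul]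

lemma dotProduct_mulVec_eq_sum_eigenvalues (u v : ι → ℝ) :
    u ⬝ᵥ (A *ᵥ v) = ∑ k, hA.eigenvalues k *
      ((⇑(hA.eigenvectorBasis k) ⬝ᵥ u) * (⇑(hA.eigenvectorBasis k) ⬝ᵥ v)) := by
  rw [hA.dotProduct_eq_sum_eigenvectorBasis]
  exact Finset.sum_congr rfl fun k _ => by rw [eigenvectorBasis_dotProduct_mulVec]; ring

theorem mul_dotProduct_self_le_dotProduct_mulVec_of_orthogonal {n : ℕ} (hn : 1 < n)
    {A : Matrix (Fin n) (Fin n) ℝ} (hA : A.IsHermitian) {c : ℝ} {z y : Fin n → ℝ}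
    (hz : z ≠ 0) (hAz : A *ᵥ z = c • z)
    (hc : c < (hA.eigenvalues ∘ Tuple.sort hA.eigenvalues) ⟨1, hn⟩) (hzy : z ⬝ᵥ y = 0) :
    (hA.eigenvalues ∘ Tuple.sort hA.eigenvalues) ⟨1, hn⟩ * (y ⬝ᵥ y) ≤ y ⬝ᵥ (A *ᵥ y) := by
  set μ := hA.eigenvalues
  set b : Fin n → Fin n → ℝ := fun k => ⇑(hA.eigenvectorBasis k)
  set k₀ := Tuple.sort μ ⟨0, by omega⟩
  have hgap : ∀ k ≠ k₀, (μ ∘ Tuple.sort μ) ⟨1, hn⟩ ≤ μ k :=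
    fun k hk => Tuple.comp_sort_one_le_of_ne hn μ hk
  have hz_coeff : ∀ k ≠ k₀, b k ⬝ᵥ z = 0 := by
    intro k hk
    have h : (μ k - c) * (b k ⬝ᵥ z) = 0 := by
      rw [sub_mul, ← hA.eigenvectorBasis_dotProduct_mulVec, hAz, dotProduct_smul, smul_eq_mul,
        sub_self]
    exact (mul_eq_zero.1 h).resolve_left (sub_ne_zero.2 (hc.trans_le (hgap k hk)).ne')
  have hz₀ : b k₀ ⬝ᵥ z ≠ 0 := by
    intro h
    refine hz (dotProduct_self_eq_zero.1 ?_)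
    rw [hA.dotProduct_eq_sum_eigenvectorBasis]
    refine Finset.sum_eq_zero fun k _ => ?_
    obtain rfl | hk := eq_or_ne k k₀
    · simp [b, h]
    · simp [b, hz_coeff k hk]
  have hy₀ : b k₀ ⬝ᵥ y = 0 := by
    rw [hA.dotProduct_eq_sum_eigenvectorBasis, Finset.sum_eq_single k₀
      (fun k _ hk => by simp [b, hz_coeff k hk]) (by simp)] at hzy
    exact (mul_eq_zero.1 hzy).resolve_left hz₀
  rw [hA.dotProduct_mulVec_eq_sum_eigenvalues, hA.dotProduct_eq_sum_eigenvectorBasis,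
    Finset.mul_sum]
  refine Finset.sum_le_sum fun k _ => ?_
  obtain rfl | hk := eq_or_ne k k₀
  · simp [b, hy₀]
  · exact mul_le_mul_of_nonneg_right (hgap k hk) (mul_self_nonneg _)

end Matrix.IsHermitian

section WeightedGraph

variable {ι : Type*} [Fintype ι] (w : ι → ι → ℝ)

lemma sum_sum_mul_sub_sq_of_symm (hwsymm : ∀ i j, w i j = w j i) (a : ι → ℝ) :
    ∑ i, ∑ j, w i j * (a i - a j) ^ 2
      = 2 * (∑ i, (∑ j, w i j) * a i ^ 2 - ∑ i, ∑ j, w i j * (a i * a j)) := by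
  have hswap : ∑ i, ∑ j, w i j * a j ^ 2 = ∑ i, ∑ j, w i j * a i ^ 2 := by
    rw [Finset.sum_comm]
    simp only [hwsymm _ _]
  have hexpand : ∑ i, ∑ j, w i j * (a i - a j) ^ 2
      = ∑ i, ∑ j, w i j * a i ^ 2 + ∑ i, ∑ j, w i j * a j ^ 2
        - 2 * ∑ i, ∑ j, w i j * (a i * a j) := by
    simp only [Finset.mul_sum, ← Finset.sum_add_distrib, ← Finset.sum_sub_distrib]
    exact Finset.sum_congr rfl fun i _ => Finset.sum_congr rfl fun j _ => by ring
  rw [hexpand, hswap]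
  simp only [Finset.sum_mul]
  ring

noncomputable def degreeWeightedMean (a : ι → ℝ) : ℝ :=
  (∑ i, (∑ j, w i j) * a i) / ∑ i, ∑ j, w i j

variable [DecidableEq ι]

noncomputable def normalizedLaplacian : Matrix ι ι ℝ :=
  1 - of fun i j => w i j / (√(∑ k, w i k) * √(∑ k, w j k))

variable {w}

lemma normalizedLaplacian_mulVec_sqrt_mul (hdeg : ∀ i, 0 < ∑ j, w i j) (a : ι → ℝ) :
    normalizedLaplacian w *ᵥ (fun i => √(∑ k, w i k) * a i)
      = fun i => √(∑ k, w i k) * a i - (∑ j, w i j * a j) / √(∑ k, w i k) := by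
  have hsqrt : ∀ j, √(∑ k, w j k) ≠ 0 := fun j => (Real.sqrt_pos.2 (hdeg j)).ne'
  rw [normalizedLaplacian, sub_mulVec, one_mulVec]
  ext i
  simp only [Pi.sub_apply, mulVec, dotProduct, of_apply, Finset.sum_div]
  congr 1
  refine Finset.sum_congr rfl fun j _ => ?_
  field_simp [hsqrt i, hsqrt j]

lemma normalizedLaplacian_mulVec_sqrt_degree (hdeg : ∀ i, 0 < ∑ j, w i j) :
    normalizedLaplacian w *ᵥ (fun i => √(∑ k, w i k)) = 0 := by
  have h := normalizedLaplacian_mulVec_sqrt_mul hdeg 1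
  simp only [Pi.one_apply, mul_one] at h
  rw [h]
  ext i
  simp [Real.div_sqrt]

lemma dotProduct_normalizedLaplacian_mulVec_sqrt_mul (hwsymm : ∀ i j, w i j = w j i)
    (hdeg : ∀ i, 0 < ∑ j, w i j) (a : ι → ℝ) :
    (fun i => √(∑ k, w i k) * a i) ⬝ᵥ
        (normalizedLaplacian w *ᵥ fun i => √(∑ k, w i k) * a i)
      = (1 / 2) * ∑ i, ∑ j, w i j * (a i - a j) ^ 2 := by
  rw [normalizedLaplacian_mulVec_sqrt_mul hdeg, sum_sum_mul_sub_sq_of_symm w hwsymm,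
    ← Finset.sum_sub_distrib]
  simp only [dotProduct, one_div, inv_mul_cancel_left₀ (two_ne_zero' ℝ)]
  refine Finset.sum_congr rfl fun i _ => ?_
  have hsqrt : √(∑ k, w i k) ≠ 0 := (Real.sqrt_pos.2 (hdeg i)).ne'
  have hcross : ∑ j, w i j * (a i * a j) = a i * ∑ j, w i j * a j := by
    rw [Finset.mul_sum]
    exact Finset.sum_congr rfl fun j _ => by ring
  rw [hcross]
  field_simp
  rw [Real.sq_sqrt (hdeg i).le]
  ring

theorem mul_sum_degree_mul_sub_degreeWeightedMean_sq_le {n : ℕ} (hn : 1 < n)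
    {w : Fin n → Fin n → ℝ} (hwsymm : ∀ i j, w i j = w j i) (hdeg : ∀ i, 0 < ∑ j, w i j)
    (hL : (normalizedLaplacian w).IsHermitian)
    (hpos : 0 < (hL.eigenvalues ∘ Tuple.sort hL.eigenvalues) ⟨1, hn⟩) (a : Fin n → ℝ) :
    (hL.eigenvalues ∘ Tuple.sort hL.eigenvalues) ⟨1, hn⟩ *
        ∑ i, (∑ j, w i j) * (a i - degreeWeightedMean w a) ^ 2
      ≤ (1 / 2) * ∑ i, ∑ j, w i j * (a i - a j) ^ 2 := by
  set α := degreeWeightedMean w a with hα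
  have hvol : 0 < ∑ i, ∑ j, w i j :=
    Finset.sum_pos (fun i _ => hdeg i) ⟨⟨0, by omega⟩, Finset.mem_univ _⟩
  have hz : (fun i => √(∑ k, w i k)) ≠ 0 :=
    fun h => (Real.sqrt_pos.2 (hdeg ⟨0, by omega⟩)).ne' (congrFun h _)
  have hzy : (fun i => √(∑ k, w i k)) ⬝ᵥ (fun i => √(∑ k, w i k) * (a i - α)) = 0 := by
    simp only [dotProduct, ← mul_assoc, Real.mul_self_sqrt (hdeg _).le, mul_sub,
      Finset.sum_sub_distrib, ← Finset.sum_mul]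
    rw [hα, degreeWeightedMean, mul_div_cancel₀ _ hvol.ne', sub_self]
  have hyy : (fun i => √(∑ k, w i k) * (a i - α)) ⬝ᵥ (fun i => √(∑ k, w i k) * (a i - α))
      = ∑ i, (∑ j, w i j) * (a i - α) ^ 2 :=
    Finset.sum_congr rfl fun i _ => by
      rw [mul_mul_mul_comm, Real.mul_self_sqrt (hdeg i).le, sq]
  have hgap := hL.mul_dotProduct_self_le_dotProduct_mulVec_of_orthogonal hn hz
    (by rw [normalizedLaplacian_mulVec_sqrt_degree hdeg, zero_smul]) hpos hzy
  rw [hyy, dotProduct_normalizedLaplacian_mulVec_sqrt_mul hwsymm hdeg] at hgap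
  simpa only [sub_sub_sub_cancel_right] using hgap

end WeightedGraph

lemma sq_norm_sub_norm_le_sq_norm_sub_toEuclideanLin {𝕜 ι : Type*} [RCLike 𝕜] [Fintype ι]
    [DecidableEq ι] {U : Matrix ι ι 𝕜} (hU : U ∈ unitaryGroup ι 𝕜) (u v : EuclideanSpace 𝕜 ι) :
    (‖u‖ - ‖v‖) ^ 2 ≤ ‖u - toEuclideanLin U v‖ ^ 2 := by
  rw [← norm_toEuclideanLin_of_mem_unitaryGroup hU v, ← sq_abs]
  exact pow_le_pow_left₀ (abs_nonneg _) (abs_norm_sub_norm_le _ _) 2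

lemma norm_sub_smul_normalize_le {E : Type*} [NormedAddCommGroup E] [NormedSpace ℝ E]
    [DecidableEq E] (v : E) (α : ℝ) : ‖v - α • (if v = 0 then 0 else ‖v‖⁻¹ • v)‖ ≤ |‖v‖ - α| := by
  split_ifs with hv
  · simp [hv]
  · have hv' : ‖v‖ ≠ 0 := norm_ne_zero_iff.2 hv
    have hsplit : v - α • ‖v‖⁻¹ • v = (‖v‖ - α) • ‖v‖⁻¹ • v := by
      rw [sub_smul, smul_inv_smul₀ hv']
    rw [hsplit, norm_smul, norm_smul, norm_inv, norm_norm, inv_mul_cancel₀ hv', mul_one,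
      Real.norm_eq_abs]

theorem stmt_13_general (n d : ℕ) (hn : 1 < n) (w : Fin n → Fin n → ℝ)
    (hw : ∀ i j, 0 ≤ w i j) (hwsymm : ∀ i j, w i j = w j i)
    (hdeg : ∀ i, 0 < ∑ j, w i j)
    (ρ : Fin n → Fin n → Matrix (Fin d) (Fin d) ℝ)
    (hρ : ∀ i j, ρ i j ∈ Matrix.orthogonalGroup (Fin d) ℝ)
    (L0 : Matrix (Fin n) (Fin n) ℝ)
    (hL0 : L0 = 1 - Matrix.of (fun i j : Fin n =>
        w i j / (Real.sqrt (∑ k, w i k) * Real.sqrt (∑ k, w j k))))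
    (hherm : L0.IsHermitian)
    (lam2 : ℝ)
    (hlam2 : lam2 = (hherm.eigenvalues ∘ Tuple.sort hherm.eigenvalues) ⟨1, hn⟩)
    (hpos : 0 < lam2)
    (x : Fin n → EuclideanSpace ℝ (Fin d)) :
    ∃ α : ℝ, 0 ≤ α ∧
      ∑ i, (∑ j, w i j) * ‖x i - α • (if x i = 0 then 0 else ‖x i‖⁻¹ • x i)‖ ^ 2
        ≤ (((1 / 2) * ∑ i, ∑ j, w i j * ‖x i - Matrix.toEuclideanLin (ρ i j) (x j)‖ ^ 2) /
              (∑ i, (∑ j, w i j) * ‖x i‖ ^ 2)) / lam2 *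
            ∑ i, (∑ j, w i j) * ‖x i‖ ^ 2 := by
  subst hL0
  set E := (1 / 2) * ∑ i, ∑ j, w i j * ‖x i - Matrix.toEuclideanLin (ρ i j) (x j)‖ ^ 2
  set S := ∑ i, (∑ j, w i j) * ‖x i‖ ^ 2
  set α := degreeWeightedMean w fun i => ‖x i‖
  have hα : 0 ≤ α := div_nonneg
    (Finset.sum_nonneg fun i _ => mul_nonneg (hdeg i).le (norm_nonneg _))
    (Finset.sum_nonneg fun i _ => (hdeg i).le)
  -- For `x = 0`, `η(x)` is the junk value `E / 0 = 0`; the bound survives since then `E = 0`.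
  have hES : S = 0 → E = 0 := by
    intro hS
    have hx : ∀ i, x i = 0 := fun i => by
      have hterm := (Finset.sum_eq_zero_iff_of_nonneg fun i _ =>
        mul_nonneg (hdeg i).le (sq_nonneg _)).1 hS i (Finset.mem_univ i)
      simpa [(hdeg i).ne'] using hterm
    simp [E, hx]
  refine ⟨α, hα, ?_⟩
  calc ∑ i, (∑ j, w i j) * ‖x i - α • (if x i = 0 then 0 else ‖x i‖⁻¹ • x i)‖ ^ 2
      ≤ ∑ i, (∑ j, w i j) * (‖x i‖ - α) ^ 2 := by
        refine Finset.sum_le_sum fun i _ => mul_le_mul_of_nonneg_left ?_ (hdeg i).le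
        rw [← sq_abs (‖x i‖ - α)]
        exact pow_le_pow_left₀ (norm_nonneg _) (norm_sub_smul_normalize_le _ _) 2
    _ ≤ (1 / 2) * (∑ i, ∑ j, w i j * (‖x i‖ - ‖x j‖) ^ 2) / lam2 := by
        rw [le_div_iff₀ hpos, mul_comm, hlam2]
        exact mul_sum_degree_mul_sub_degreeWeightedMean_sq_le hn hwsymm hdeg hherm
          (hlam2 ▸ hpos) _
    _ ≤ E / lam2 := by
        refine div_le_div_of_nonneg_right (mul_le_mul_of_nonneg_left ?_ one_half_pos.le) hpos.le
        exact Finset.sum_le_sum fun i _ => Finset.sum_le_sum fun j _ => mul_le_mul_of_nonneg_left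
          (sq_norm_sub_norm_le_sq_norm_sub_toEuclideanLin (hρ i j) _ _) (hw i j)
    _ = E / S / lam2 * S := by
        rw [div_right_comm, div_mul_cancel_of_imp fun hS => by simp [hES hS]]

theorem stmt_13 (n d : ℕ) (hn : 1 < n) (w : Fin n → Fin n → ℝ)
    (hw : ∀ i j, 0 ≤ w i j) (hwsymm : ∀ i j, w i j = w j i)
    (hdeg : ∀ i, 0 < ∑ j, w i j)
    (ρ : Fin n → Fin n → Matrix (Fin d) (Fin d) ℝ)
    (hρ : ∀ i j, ρ i j ∈ Matrix.orthogonalGroup (Fin d) ℝ)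
    (hρsymm : ∀ i j, ρ j i = (ρ i j)ᵀ)
    (L0 : Matrix (Fin n) (Fin n) ℝ)
    (hL0 : L0 = 1 - Matrix.of (fun i j : Fin n =>
        w i j / (Real.sqrt (∑ k, w i k) * Real.sqrt (∑ k, w j k))))
    (hherm : L0.IsHermitian)
    (lam2 : ℝ)
    (hlam2 : lam2 = (hherm.eigenvalues ∘ Tuple.sort hherm.eigenvalues) ⟨1, hn⟩)
    (hpos : 0 < lam2)
    (x : Fin n → EuclideanSpace ℝ (Fin d)) :
    ∃ α : ℝ, 0 ≤ α ∧
      ∑ i, (∑ j, w i j) * ‖x i - α • (if x i = 0 then 0 else ‖x i‖⁻¹ • x i)‖ ^ 2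
        ≤ (((1 / 2) * ∑ i, ∑ j, w i j * ‖x i - Matrix.toEuclideanLin (ρ i j) (x j)‖ ^ 2) /
              (∑ i, (∑ j, w i j) * ‖x i‖ ^ 2)) / lam2 *
            ∑ i, (∑ j, w i j) * ‖x i‖ ^ 2 :=
  stmt_13_general n d hn w hw hwsymm hdeg ρ hρ L0 hL0 hherm lam2 hlam2 hpos x
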